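/- arXiv:2605.28133 — 3 statements merged into one kernel-verified Lean document; each statement's English description precedes it below -/
import Mathlib

section
/- Let P and Q be probability measures on the same measurable space (Ω, F), and let A ∈ F. Then P(A) + Q(Aᶜ) ≥ (1/2) exp(-D(P,Q)), where D(P,Q) denotes the Kullback-Leibler divergence of P with respect to Q. -/
open MeasureTheory Set

/-- The Kullback–Leibler divergence `∫ log (dP/dQ) dP` (as a real number;
meaningful when `P ≪ Q` and the integrand is `P`-integrable). -/
noncomputable def klDivReal {Ω : Type*} [MeasurableSpace Ω] (P Q : Measure Ω) : ℝ :=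
  ∫ ω, Real.log (P.rnDeriv Q ω).toReal ∂P

open scoped ENNReal

/-! Write `ρ = dP/dQ` and let `H = ∫ √ρ dQ = ∫ ρ^(-1/2) dP` be the Hellinger affinity. Jensen's
inequality for `exp` under `P` gives `exp (-D(P,Q)/2) ≤ H`. Cauchy–Schwarz applied to
`ρ = min ρ 1 * max ρ 1` gives `H² ≤ ∫ min ρ 1 dQ * ∫ max ρ 1 dQ`, where the first factor is at most
`P(A) + Q(Aᶜ)` (bound `min ρ 1` by `ρ` on `A` and by `1` on `Aᶜ`) and the second at most `2`. -/

theorem ENNReal.sq_lintegral_sqrt_mul_le {α : Type*} [MeasurableSpace α] {μ : Measure α}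
    {f g : α → ℝ≥0∞} (hf : AEMeasurable f μ) (hg : AEMeasurable g μ) :
    (∫⁻ x, (f x * g x) ^ (2⁻¹ : ℝ) ∂μ) ^ 2 ≤ (∫⁻ x, f x ∂μ) * ∫⁻ x, g x ∂μ := by
  have hhalf : (0 : ℝ) ≤ 2⁻¹ := by norm_num
  have holder : ∫⁻ x, (f x * g x) ^ (2⁻¹ : ℝ) ∂μ
      ≤ (∫⁻ x, f x ∂μ) ^ (2⁻¹ : ℝ) * (∫⁻ x, g x ∂μ) ^ (2⁻¹ : ℝ) := by
    simp_rw [ENNReal.mul_rpow_of_nonneg _ _ hhalf]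
    exact ENNReal.lintegral_mul_norm_pow_le hf hg hhalf hhalf (by norm_num)
  calc (∫⁻ x, (f x * g x) ^ (2⁻¹ : ℝ) ∂μ) ^ 2
      ≤ ((∫⁻ x, f x ∂μ) ^ (2⁻¹ : ℝ) * (∫⁻ x, g x ∂μ) ^ (2⁻¹ : ℝ)) ^ 2 := by gcongr
    _ = (∫⁻ x, f x ∂μ) * ∫⁻ x, g x ∂μ := by
      rw [mul_pow, ← ENNReal.rpow_natCast, ← ENNReal.rpow_natCast, Nat.cast_ofNat,
        ENNReal.rpow_inv_rpow two_ne_zero, ENNReal.rpow_inv_rpow two_ne_zero]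

theorem ENNReal.ofReal_exp_integral_le_lintegral {α : Type*} [MeasurableSpace α] {μ : Measure α}
    [IsProbabilityMeasure μ] {f : α → ℝ} (hf : Integrable f μ) :
    ENNReal.ofReal (Real.exp (∫ x, f x ∂μ)) ≤ ∫⁻ x, ENNReal.ofReal (Real.exp (f x)) ∂μ := by
  by_cases h_top : ∫⁻ x, ENNReal.ofReal (Real.exp (f x)) ∂μ = ∞
  · simp [h_top]
  have h_exp_int : Integrable (fun x ↦ Real.exp (f x)) μ :=
    ⟨Real.continuous_exp.comp_aestronglyMeasurable hf.aestronglyMeasurable,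
      (hasFiniteIntegral_iff_ofReal (ae_of_all _ fun x ↦ (Real.exp_pos _).le)).2
        (lt_top_iff_ne_top.2 h_top)⟩
  rw [← ofReal_integral_eq_lintegral_ofReal h_exp_int (ae_of_all _ fun x ↦ (Real.exp_pos _).le)]
  exact ENNReal.ofReal_le_ofReal <| convexOn_exp.map_integral_le Real.continuous_exp.continuousOn
    isClosed_univ (ae_of_all _ fun _ ↦ mem_univ _) hf h_exp_int

namespace MeasureTheory.Measure

variable {Ω : Type*} [MeasurableSpace Ω] {μ ν : Measure Ω}

noncomputable def hellingerAffinity (μ ν : Measure Ω) : ℝ≥0∞ :=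
  ∫⁻ x, μ.rnDeriv ν x ^ (2⁻¹ : ℝ) ∂ν

lemma lintegral_min_rnDeriv_one_le {s : Set Ω} (hs : MeasurableSet s) :
    ∫⁻ x, min (μ.rnDeriv ν x) 1 ∂ν ≤ μ s + ν sᶜ := by
  rw [← lintegral_add_compl _ hs]
  gcongr
  · exact (setLIntegral_mono' hs fun x _ ↦ min_le_left _ _).trans (setLIntegral_rnDeriv_le s)
  · exact (setLIntegral_mono' hs.compl fun x _ ↦ min_le_right _ _).trans_eq (by simp)

lemma lintegral_max_rnDeriv_one_le : ∫⁻ x, max (μ.rnDeriv ν x) 1 ∂ν ≤ μ univ + ν univ :=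
  calc ∫⁻ x, max (μ.rnDeriv ν x) 1 ∂ν ≤ ∫⁻ x, (μ.rnDeriv ν x + 1) ∂ν :=
        lintegral_mono fun x ↦ max_le le_self_add le_add_self
    _ ≤ μ univ + ν univ := by
        rw [lintegral_add_right _ measurable_const, lintegral_one]
        gcongr
        exact lintegral_rnDeriv_le

lemma sq_hellingerAffinity_le {s : Set Ω} (hs : MeasurableSet s) :
    hellingerAffinity μ ν ^ 2 ≤ (μ s + ν sᶜ) * (μ univ + ν univ) := by
  have hsplit : ∀ x, μ.rnDeriv ν x = min (μ.rnDeriv ν x) 1 * max (μ.rnDeriv ν x) 1 := fun x ↦ by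
    rw [min_mul_max, mul_one]
  calc hellingerAffinity μ ν ^ 2
      = (∫⁻ x, (min (μ.rnDeriv ν x) 1 * max (μ.rnDeriv ν x) 1) ^ (2⁻¹ : ℝ) ∂ν) ^ 2 := by
        simp_rw [← hsplit]; rfl
    _ ≤ (∫⁻ x, min (μ.rnDeriv ν x) 1 ∂ν) * ∫⁻ x, max (μ.rnDeriv ν x) 1 ∂ν :=
        ENNReal.sq_lintegral_sqrt_mul_le (by fun_prop) (by fun_prop)
    _ ≤ (μ s + ν sᶜ) * (μ univ + ν univ) :=
        mul_le_mul' (lintegral_min_rnDeriv_one_le hs) lintegral_max_rnDeriv_one_le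

lemma lintegral_rnDeriv_rpow_sub_one [SigmaFinite μ] [HaveLebesgueDecomposition μ ν]
    (hμν : μ ≪ ν) {r : ℝ} (hr : 0 < r) :
    ∫⁻ x, μ.rnDeriv ν x ^ (r - 1) ∂μ = ∫⁻ x, μ.rnDeriv ν x ^ r ∂ν := by
  rw [← lintegral_rnDeriv_mul hμν (by fun_prop)]
  refine lintegral_congr_ae ?_
  filter_upwards [rnDeriv_ne_top μ ν] with x hx_top
  rcases eq_or_ne (μ.rnDeriv ν x) 0 with hx_zero | hx_zero
  · simp [hx_zero, hr]
  · calc μ.rnDeriv ν x * μ.rnDeriv ν x ^ (r - 1) = μ.rnDeriv ν x ^ (1 + (r - 1)) := by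
          rw [ENNReal.rpow_add _ _ hx_zero hx_top, ENNReal.rpow_one]
      _ = μ.rnDeriv ν x ^ r := by rw [add_sub_cancel]

lemma ofReal_exp_neg_half_integral_llr_le_hellingerAffinity [IsProbabilityMeasure μ]
    [SigmaFinite ν] (hμν : μ ≪ ν) (h_int : Integrable (llr μ ν) μ) :
    ENNReal.ofReal (Real.exp (-(∫ x, llr μ ν x ∂μ) / 2)) ≤ hellingerAffinity μ ν := by
  have h_exp : ∀ᵐ x ∂μ, ENNReal.ofReal (Real.exp (llr μ ν x * (-2⁻¹)))
      = μ.rnDeriv ν x ^ (2⁻¹ - 1 : ℝ) := by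
    filter_upwards [rnDeriv_pos hμν, hμν.ae_le (rnDeriv_ne_top μ ν)] with x hx_pos hx_top
    rw [llr, ← Real.rpow_def_of_pos (ENNReal.toReal_pos hx_pos.ne' hx_top),
      ← ENNReal.ofReal_rpow_of_pos (ENNReal.toReal_pos hx_pos.ne' hx_top),
      ENNReal.ofReal_toReal hx_top]
    norm_num
  calc ENNReal.ofReal (Real.exp (-(∫ x, llr μ ν x ∂μ) / 2))
      = ENNReal.ofReal (Real.exp (∫ x, llr μ ν x * (-2⁻¹) ∂μ)) := by
        rw [integral_mul_const]; ring_nf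
    _ ≤ ∫⁻ x, ENNReal.ofReal (Real.exp (llr μ ν x * (-2⁻¹))) ∂μ :=
        ENNReal.ofReal_exp_integral_le_lintegral (h_int.mul_const _)
    _ = hellingerAffinity μ ν := by
        rw [lintegral_congr_ae h_exp, lintegral_rnDeriv_rpow_sub_one hμν (by norm_num)]
        rfl

end MeasureTheory.Measure

/-- Bretagnolle–Huber inequality: for probability measures `P, Q` on the same measurable
space and any measurable event `A`, `P(A) + Q(Aᶜ) ≥ (1/2) exp(-D(P,Q))`.  (When `P` is not
absolutely continuous w.r.t. `Q`, or the divergence is infinite, the inequality is trivial;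
we state the nontrivial finite case.) -/
theorem stmt2 {Ω : Type*} [MeasurableSpace Ω] (P Q : Measure Ω)
    [IsProbabilityMeasure P] [IsProbabilityMeasure Q]
    (hPQ : P ≪ Q)
    (hint : Integrable (fun ω => Real.log (P.rnDeriv Q ω).toReal) P)
    (A : Set Ω) (hA : MeasurableSet A) :
    (1 / 2) * Real.exp (-(klDivReal P Q)) ≤ (P A).toReal + (Q Aᶜ).toReal := by
  have h_ennreal : ENNReal.ofReal (Real.exp (-(klDivReal P Q))) ≤ (P A + Q Aᶜ) * 2 :=
    calc ENNReal.ofReal (Real.exp (-(klDivReal P Q)))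
        = ENNReal.ofReal (Real.exp (-(∫ x, llr P Q x ∂P) / 2)) ^ 2 := by
          rw [← ENNReal.ofReal_pow (Real.exp_pos _).le, ← Real.exp_nat_mul]
          congr 2; simp only [klDivReal, llr]; ring
      _ ≤ Measure.hellingerAffinity P Q ^ 2 := by
          gcongr; exact Measure.ofReal_exp_neg_half_integral_llr_le_hellingerAffinity hPQ hint
      _ ≤ (P A + Q Aᶜ) * 2 := by
          simpa [one_add_one_eq_two] using Measure.sq_hellingerAffinity_le (μ := P) (ν := Q) hA
  have h_real := (ENNReal.ofReal_le_iff_le_toReal (by finiteness)).1 h_ennreal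
  rw [ENNReal.toReal_mul, ENNReal.toReal_add (by finiteness) (by finiteness)] at h_real
  norm_num at h_real
  linarith
end

section
/- Let T ~ Exp(γ) and, conditionally on T, let B ~ Poisson(μT). Then for any δ ∈ (0,1), if a single sample with N i.i.d. copies is taken, the sum N_b = Σ_{n=1}^N B_n satisfies N_b ≥ μN/(2γ) with probability at least 1 - δ, provided μ > 2γ and N ≥ 32 log(2/δ). -/
open MeasureTheory ProbabilityTheory
open scoped ENNReal NNReal Nat

/-- The mixed Poisson distribution on `ℕ`: `B ~ Poisson(μT)` with `T ~ Exp(γ)`. -/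
noncomputable def mixedPoisson (γ μ : ℝ) : Measure ℕ :=
  (expMeasure γ).bind fun t => poissonMeasure (Real.toNNReal (μ * t))

lemma hasSum_exp_div (x : ℝ) : HasSum (fun n : ℕ => x ^ n / n !) (Real.exp x) := by
  rw [Real.exp_eq_exp_ℝ]
  exact NormedSpace.expSeries_div_hasSum_exp x

lemma poissonMeasure_singleton (r : ℝ≥0) (k : ℕ) :
    poissonMeasure r {k} = ENNReal.ofReal (poissonPMFReal r k) := by
  rw [ProbabilityTheory.poissonMeasure_singleton]
  rfl

lemma lintegral_exp_poisson (t : ℝ) (r : ℝ≥0) :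
    ∫⁻ k : ℕ, ENNReal.ofReal (Real.exp (t * k)) ∂(poissonMeasure r)
      = ENNReal.ofReal (Real.exp ((r : ℝ) * (Real.exp t - 1))) := by
  rw [lintegral_countable']
  have key : ∀ k : ℕ, ENNReal.ofReal (Real.exp (t * (k : ℝ))) * poissonMeasure r {k}
      = ENNReal.ofReal (Real.exp (-(r : ℝ)) * (((r : ℝ) * Real.exp t) ^ k / (k ! : ℝ))) := by
    intro k
    rw [_root_.poissonMeasure_singleton, ← ENNReal.ofReal_mul (Real.exp_pos _).le]
    congr 1
    rw [poissonPMFReal, mul_comm t (k : ℝ), Real.exp_nat_mul, mul_pow]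
    ring
  simp_rw [key]
  have hsum : HasSum (fun k : ℕ => Real.exp (-(r : ℝ)) * (((r : ℝ) * Real.exp t) ^ k / (k ! : ℝ)))
      (Real.exp ((r : ℝ) * (Real.exp t - 1))) := by
    have h := (hasSum_exp_div ((r : ℝ) * Real.exp t)).mul_left (Real.exp (-(r : ℝ)))
    rw [show Real.exp ((r : ℝ) * (Real.exp t - 1))
        = Real.exp (-(r : ℝ)) * Real.exp ((r : ℝ) * Real.exp t) by
      rw [← Real.exp_add]
      congr 1
      ring]
    exact h
  rw [← ENNReal.ofReal_tsum_of_nonneg (fun k => by positivity) hsum.summable, hsum.tsum_eq]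

lemma measurable_poisson_kernel (μ : ℝ) :
    Measurable fun x : ℝ => poissonMeasure (Real.toNNReal (μ * x)) := by
  apply Measure.measurable_of_measurable_coe
  intro s hs
  simp_rw [poissonMeasure, Measure.sum_apply _ hs, Measure.smul_apply, smul_eq_mul]
  apply Measurable.ennreal_tsum
  intro k
  have hr : Measurable fun x : ℝ => ((Real.toNNReal (μ * x) : ℝ≥0) : ℝ) := by
    simp only [Real.coe_toNNReal']
    exact (measurable_const.mul measurable_id).max measurable_const
  have hm : Measurable fun x : ℝ =>
      ENNReal.ofReal (Real.exp (-((Real.toNNReal (μ * x) : ℝ≥0) : ℝ))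
            * ((Real.toNNReal (μ * x) : ℝ≥0) : ℝ) ^ k / (k ! : ℝ)) :=
    ENNReal.measurable_ofReal.comp
      (((Real.measurable_exp.comp hr.neg).mul (hr.pow_const k)).div_const _)
  exact hm.mul_const _

lemma lintegral_exp_mixedPoisson {γ μ : ℝ} (hγ : 0 < γ) (hμ : 0 < μ) {t : ℝ} (ht : t < 0) :
    ∫⁻ k : ℕ, ENNReal.ofReal (Real.exp (t * k)) ∂(mixedPoisson γ μ)
      = ENNReal.ofReal (γ / (γ + μ * (1 - Real.exp t))) := by
  set c : ℝ := μ * (1 - Real.exp t) with hc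
  have hcpos : 0 < c := mul_pos hμ (by linarith [Real.exp_lt_one_iff.mpr ht])
  have hf : Measurable fun k : ℕ => ENNReal.ofReal (Real.exp (t * k)) :=
    measurable_from_top
  rw [mixedPoisson, Measure.lintegral_bind (measurable_poisson_kernel μ).aemeasurable hf.aemeasurable]
  simp_rw [lintegral_exp_poisson]
  have hexpm : expMeasure γ = volume.withDensity (exponentialPDF γ) := rfl
  have hr : Measurable fun x : ℝ => ((Real.toNNReal (μ * x) : ℝ≥0) : ℝ) := by
    simp only [Real.coe_toNNReal']
    exact (measurable_const.mul measurable_id).max measurable_const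
  have hg : Measurable fun x : ℝ =>
      ENNReal.ofReal (Real.exp (((Real.toNNReal (μ * x) : ℝ≥0) : ℝ) * (Real.exp t - 1))) :=
    ENNReal.measurable_ofReal.comp (Real.measurable_exp.comp (hr.mul_const _))
  have hpdf : Measurable (exponentialPDF γ) :=
    ENNReal.measurable_ofReal.comp (measurable_exponentialPDFReal γ)
  rw [hexpm, lintegral_withDensity_eq_lintegral_mul _ hpdf hg]
  have hpt : ∀ x : ℝ, (exponentialPDF γ * fun x =>
      ENNReal.ofReal (Real.exp (((Real.toNNReal (μ * x) : ℝ≥0) : ℝ) * (Real.exp t - 1)))) x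
      = ENNReal.ofReal (γ / (γ + c)) * exponentialPDF (γ + c) x := by
    intro x
    simp only [Pi.mul_apply]
    rcases lt_or_ge x 0 with hx | hx
    · rw [exponentialPDF_of_neg hx, exponentialPDF_of_neg hx, zero_mul, mul_zero]
    · rw [exponentialPDF_of_nonneg hx, exponentialPDF_of_nonneg hx,
        ← ENNReal.ofReal_mul (by positivity), ← ENNReal.ofReal_mul (by positivity)]
      congr 1
      rw [Real.coe_toNNReal _ (by positivity : (0:ℝ) ≤ μ * x)]
      rw [mul_assoc, ← Real.exp_add]
      have harg : -(γ * x) + μ * x * (Real.exp t - 1) = -((γ + c) * x) := by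
        rw [hc]; ring
      rw [harg]
      field_simp
  have hm2 : Measurable (exponentialPDF (γ + c)) := by
    unfold exponentialPDF
    exact ENNReal.measurable_ofReal.comp (measurable_exponentialPDFReal (γ + c))
  rw [lintegral_congr hpt, lintegral_const_mul _ hm2,
    lintegral_exponentialPDF_eq_one (by positivity), mul_one]

lemma mgf_of_map_mixedPoisson {Ω : Type*} [MeasurableSpace Ω] (P : Measure Ω)
    {γ μ : ℝ} (hγ : 0 < γ) (hμ : 0 < μ) {t : ℝ} (ht : t < 0)
    {X : Ω → ℕ} (hX : Measurable X) (hd : Measure.map X P = mixedPoisson γ μ) :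
    mgf (fun ω => (X ω : ℝ)) P t = γ / (γ + μ * (1 - Real.exp t)) := by
  have hcpos : 0 < μ * (1 - Real.exp t) :=
    mul_pos hμ (by linarith [Real.exp_lt_one_iff.mpr ht])
  have hg : Measurable fun k : ℕ => Real.exp (t * k) := measurable_from_top
  have h1 : mgf (fun ω => (X ω : ℝ)) P t = ∫ k : ℕ, Real.exp (t * k) ∂(Measure.map X P) :=
    (integral_map hX.aemeasurable hg.aestronglyMeasurable).symm
  rw [h1, hd, integral_eq_lintegral_of_nonneg_ae (ae_of_all _ fun k => (Real.exp_pos _).le)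
    hg.aestronglyMeasurable, lintegral_exp_mixedPoisson hγ hμ ht,
    ENNReal.toReal_ofReal (le_of_lt (div_pos hγ (by linarith)))]

set_option maxHeartbeats 1000000 in
/-- If `B₁,…,B_N` are i.i.d. mixed Poisson (Poisson with random mean `μT`, `T ~ Exp(γ)`),
`μ > 2γ` and `N ≥ 32 log(2/δ)`, then `Σ Bₙ ≥ μN/(2γ)` with probability at least `1 - δ`. -/
theorem stmt10 {Ω : Type*} [MeasurableSpace Ω] (P : Measure Ω) [IsProbabilityMeasure P]
    (γ μ δ : ℝ) (hγ : 0 < γ) (hμ : 2 * γ < μ) (hδ : δ ∈ Set.Ioo (0 : ℝ) 1)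
    (N : ℕ) (hN : 32 * Real.log (2 / δ) ≤ N)
    (B : ℕ → Ω → ℕ) (hmeas : ∀ n, Measurable (B n))
    (hiid : iIndepFun B P)
    (hdist : ∀ n, Measure.map (B n) P = mixedPoisson γ μ) :
    1 - δ ≤ (P {ω | μ * N / (2 * γ) ≤ ∑ n ∈ Finset.range N, (B n ω : ℝ)}).toReal := by
  obtain ⟨hδ0, hδ1⟩ := hδ
  have hμ0 : 0 < μ := by linarith
  set t : ℝ := -(γ / (2 * μ)) with htdef
  have ht : t < 0 := neg_lt_zero.mpr (div_pos hγ (by linarith))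
  set c : ℝ := μ * (1 - Real.exp t) with hcdef
  have hcpos : 0 < c := mul_pos hμ0 (by linarith [Real.exp_lt_one_iff.mpr ht])
  set a : ℝ := μ * N / (2 * γ) with hadef
  set X : ℕ → Ω → ℝ := fun n ω => (B n ω : ℝ) with hXdef
  have hXmeas : ∀ n, Measurable (X n) := fun n => measurable_from_top.comp (hmeas n)
  have hXiid : iIndepFun X P :=
    hiid.comp (fun _ => (Nat.cast : ℕ → ℝ)) (fun _ => measurable_from_top)
  -- mgf of the sum
  have hmgf_sum : mgf (∑ n ∈ Finset.range N, X n) P t = (γ / (γ + c)) ^ N := by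
    rw [hXiid.mgf_sum hXmeas]
    have : ∀ n ∈ Finset.range N, mgf (X n) P t = γ / (γ + c) := fun n _ =>
      mgf_of_map_mixedPoisson P hγ hμ0 ht (hmeas n) (hdist n)
    rw [Finset.prod_congr rfl this, Finset.prod_const, Finset.card_range]
  -- measurability and integrability
  have hSmeas : Measurable fun ω => ∑ n ∈ Finset.range N, X n ω :=
    Finset.measurable_sum _ (fun n _ => hXmeas n)
  have hSnonneg : ∀ ω, 0 ≤ (∑ n ∈ Finset.range N, X n) ω := by
    intro ω
    rw [Finset.sum_apply]
    exact Finset.sum_nonneg fun n _ => Nat.cast_nonneg _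
  have hSfun : (∑ n ∈ Finset.range N, X n) = fun ω => ∑ n ∈ Finset.range N, X n ω := by
    funext ω; simp [Finset.sum_apply]
  have hint : Integrable (fun ω => Real.exp (t * (∑ n ∈ Finset.range N, X n) ω)) P := by
    have hm : Measurable fun ω => Real.exp (t * (∑ n ∈ Finset.range N, X n) ω) := by
      rw [hSfun]
      exact Real.measurable_exp.comp (hSmeas.const_mul t)
    refine Integrable.mono' (integrable_const 1) hm.aestronglyMeasurable
      (ae_of_all _ fun ω => ?_)
    rw [Real.norm_eq_abs, abs_of_pos (Real.exp_pos _)]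
    exact Real.exp_le_one_iff.mpr (mul_nonpos_iff.mpr (Or.inr ⟨ht.le, hSnonneg ω⟩))
  -- Chernoff bound
  have hcher := measure_le_le_exp_mul_mgf (μ := P) (X := ∑ n ∈ Finset.range N, X n)
    a ht.le hint
  rw [hmgf_sum] at hcher
  -- numeric bound
  have hbound : Real.exp (-t * a) * (γ / (γ + c)) ^ N ≤ δ := by
    have hexpt : Real.exp t ≤ 2 * μ / (2 * μ + γ) := by
      have h1 : γ / (2 * μ) + 1 ≤ Real.exp (γ / (2 * μ)) := by
        have := Real.add_one_le_exp (γ / (2 * μ)); linarith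
      have h2 : Real.exp t = (Real.exp (γ / (2 * μ)))⁻¹ := by
        rw [htdef, Real.exp_neg]
      rw [h2]
      have h3 : (Real.exp (γ / (2 * μ)))⁻¹ ≤ (γ / (2 * μ) + 1)⁻¹ := by
        apply inv_anti₀ (by positivity) h1
      refine h3.trans (le_of_eq ?_)
      rw [div_add' _ _ _ (by positivity : (2:ℝ) * μ ≠ 0), inv_div]
      ring_nf
    have hc_ge : μ * γ ≤ c * (2 * μ + γ) := by
      have h4 : 1 - 2 * μ / (2 * μ + γ) ≤ 1 - Real.exp t := by linarith
      have h5 : (1:ℝ) - 2 * μ / (2 * μ + γ) = γ / (2 * μ + γ) := by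
        field_simp
        ring
      rw [hcdef]
      have h6 : μ * (γ / (2 * μ + γ)) ≤ μ * (1 - Real.exp t) :=
        mul_le_mul_of_nonneg_left (by linarith) hμ0.le
      calc μ * γ = μ * (γ / (2 * μ + γ)) * (2 * μ + γ) := by
            field_simp
        _ ≤ μ * (1 - Real.exp t) * (2 * μ + γ) := by
            apply mul_le_mul_of_nonneg_right h6 (by linarith)
    have hM5 : γ / (γ + c) ≤ 5 / 7 := by
      rw [div_le_div_iff₀ (by linarith) (by norm_num)]
      nlinarith
    have hMnonneg : (0:ℝ) ≤ γ / (γ + c) := le_of_lt (div_pos hγ (by linarith))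
    have hpow : (γ / (γ + c)) ^ N ≤ (5 / 7 : ℝ) ^ N := pow_le_pow_left₀ hMnonneg hM5 N
    have hta : -t * a = N / 4 := by
      rw [htdef, hadef]
      field_simp
      ring
    have h57 : ((5:ℝ) / 7) ^ N = Real.exp ((N : ℝ) * Real.log (5 / 7)) := by
      conv_lhs => rw [← Real.exp_log (by norm_num : (0:ℝ) < 5/7)]
      rw [← Real.exp_nat_mul]
    have hlog57 : Real.log ((5:ℝ) / 7) ≤ -(2 / 7) := by
      have := Real.log_le_sub_one_of_pos (by norm_num : (0:ℝ) < 5/7)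
      linarith
    have hlogdelta : Real.log (δ / 2) = -Real.log (2 / δ) := by
      rw [← Real.log_inv, inv_div]
    have hNnn : (0:ℝ) ≤ (N : ℝ) := Nat.cast_nonneg _
    calc Real.exp (-t * a) * (γ / (γ + c)) ^ N
        ≤ Real.exp (N / 4) * Real.exp ((N : ℝ) * Real.log (5 / 7)) := by
          rw [hta, ← h57]
          exact mul_le_mul_of_nonneg_left hpow (Real.exp_pos _).le
      _ = Real.exp ((N : ℝ) / 4 + (N : ℝ) * Real.log (5 / 7)) := (Real.exp_add _ _).symm
      _ ≤ Real.exp (Real.log (δ / 2)) := by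
          apply Real.exp_le_exp.mpr
          have h8 : (N : ℝ) * Real.log (5 / 7) ≤ (N : ℝ) * (-(2/7)) :=
            mul_le_mul_of_nonneg_left hlog57 hNnn
          rw [hlogdelta]
          nlinarith [hN]
      _ = δ / 2 := Real.exp_log (by linarith)
      _ ≤ δ := by linarith
  have hδ' : (P {ω | (∑ n ∈ Finset.range N, X n) ω ≤ a}).toReal ≤ δ := hcher.trans hbound
  -- conclude
  have hAmeas : MeasurableSet {ω | a ≤ ∑ n ∈ Finset.range N, (B n ω : ℝ)} := by
    apply measurableSet_le measurable_const
    exact hSmeas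
  have hsub : {ω | a ≤ ∑ n ∈ Finset.range N, (B n ω : ℝ)}ᶜ
      ⊆ {ω | (∑ n ∈ Finset.range N, X n) ω ≤ a} := by
    intro ω hω
    simp only [Set.mem_compl_iff, Set.mem_setOf_eq, not_le] at hω
    simp only [Set.mem_setOf_eq, Finset.sum_apply]
    exact le_of_lt hω
  have hc2 : (P {ω | a ≤ ∑ n ∈ Finset.range N, (B n ω : ℝ)}ᶜ).toReal ≤ δ :=
    le_trans (ENNReal.toReal_mono (measure_ne_top _ _) (measure_mono hsub)) hδ'
  have hadd := measure_add_measure_compl (μ := P) hAmeas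
  have hadd' := congrArg ENNReal.toReal hadd
  rw [ENNReal.toReal_add (measure_ne_top _ _) (measure_ne_top _ _), measure_univ,
    ENNReal.toReal_one] at hadd'
  linarith
end

section
/- Let {V_k}_{k=1}^n be a sequence of random vectors in ℝ^d adapted to a filtration {F_k}, with E[V_k | F_{k-1}] = 0 and ‖V_k‖₂ ≤ G almost surely. Then for any δ ∈ (0,1), with probability at least 1 - δ, ‖Σ_{k=1}^n V_k‖₂ ≤ G√(2n log(2/δ)). -/
open MeasureTheory
open Real

lemma my_sinh_le_mul_cosh {x : ℝ} (hx : 0 ≤ x) : Real.sinh x ≤ x * Real.cosh x := by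
  have key : MonotoneOn (fun t : ℝ => t * Real.cosh t - Real.sinh t) (Set.Ici 0) := by
    apply monotoneOn_of_deriv_nonneg (convex_Ici 0)
    · exact (((continuous_id.mul Real.continuous_cosh).sub Real.continuous_sinh)).continuousOn
    · intro y _
      exact (((hasDerivAt_id y).mul (Real.hasDerivAt_cosh y)).sub
        (Real.hasDerivAt_sinh y)).differentiableAt.differentiableWithinAt
    · intro y hy
      rw [interior_Ici] at hy
      have hd : HasDerivAt (fun t : ℝ => t * Real.cosh t - Real.sinh t)
          (1 * Real.cosh y + y * Real.sinh y - Real.cosh y) y := by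
        exact (((hasDerivAt_id y).mul (Real.hasDerivAt_cosh y)).sub
          (Real.hasDerivAt_sinh y))
      rw [hd.deriv]
      have : (0:ℝ) ≤ y * Real.sinh y :=
        mul_nonneg (le_of_lt hy) (Real.sinh_nonneg_iff.2 (le_of_lt hy))
      simp only [id_eq, one_mul]
      nlinarith
  have h0 := key (Set.self_mem_Ici) (Set.mem_Ici.2 hx) hx
  simp only [Real.sinh_zero, Real.cosh_zero, zero_mul, sub_zero, mul_one] at h0
  linarith [h0]

lemma my_convexOn_cosh_sqrt {L : ℝ} (hL : 0 ≤ L) :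
    ConvexOn ℝ (Set.Ici 0) (fun u : ℝ => Real.cosh (L * Real.sqrt u)) := by
  apply convexOn_of_hasDerivWithinAt2_nonneg (f' := fun u => Real.sinh (L * Real.sqrt u) * (L / (2 * Real.sqrt u)))
    (f'' := fun u => (L / (4 * u * Real.sqrt u)) * (L * Real.sqrt u * Real.cosh (L * Real.sqrt u) - Real.sinh (L * Real.sqrt u)))
    (convex_Ici 0)
  · exact (Real.continuous_cosh.comp (continuous_const.mul Real.continuous_sqrt)).continuousOn
  · intro u hu
    rw [interior_Ici] at hu
    have hu0 : (0:ℝ) < u := hu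
    have hs : (0:ℝ) < Real.sqrt u := Real.sqrt_pos.2 hu0
    have h1 : HasDerivAt (fun v : ℝ => L * Real.sqrt v) (L * (1 / (2 * Real.sqrt u))) u :=
      (Real.hasDerivAt_sqrt hu0.ne').const_mul L
    have h2 : HasDerivAt (fun v : ℝ => Real.cosh (L * Real.sqrt v))
        (Real.sinh (L * Real.sqrt u) * (L * (1 / (2 * Real.sqrt u)))) u :=
      (Real.hasDerivAt_cosh _).comp u h1
    have : Real.sinh (L * Real.sqrt u) * (L * (1 / (2 * Real.sqrt u)))
        = Real.sinh (L * Real.sqrt u) * (L / (2 * Real.sqrt u)) := by ring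
    rw [this] at h2
    exact h2.hasDerivWithinAt
  · intro u hu
    rw [interior_Ici] at hu
    have hu0 : (0:ℝ) < u := hu
    have hs : (0:ℝ) < Real.sqrt u := Real.sqrt_pos.2 hu0
    have hsq : Real.sqrt u * Real.sqrt u = u := Real.mul_self_sqrt hu0.le
    have h1 : HasDerivAt (fun v : ℝ => L * Real.sqrt v) (L * (1 / (2 * Real.sqrt u))) u :=
      (Real.hasDerivAt_sqrt hu0.ne').const_mul L
    have hsinh : HasDerivAt (fun v : ℝ => Real.sinh (L * Real.sqrt v))
        (Real.cosh (L * Real.sqrt u) * (L * (1 / (2 * Real.sqrt u)))) u :=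
      (Real.hasDerivAt_sinh _).comp u h1
    have hinv : HasDerivAt (fun v : ℝ => L / (2 * Real.sqrt v))
        (-(L * (2 * (1 / (2 * Real.sqrt u)))) / (2 * Real.sqrt u)^2) u := by
      have h3 : HasDerivAt (fun v : ℝ => 2 * Real.sqrt v) (2 * (1 / (2 * Real.sqrt u))) u :=
        (Real.hasDerivAt_sqrt hu0.ne').const_mul 2
      have h4 : (2 * Real.sqrt u) ≠ 0 := by positivity
      exact ((hasDerivAt_const u L).div h3 h4).congr_deriv (by ring)
    have hmul := hsinh.mul hinv
    have halg : ∀ r c s : ℝ, 0 < r → c * (L * (1 / (2 * r))) * (L / (2 * r))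
        + s * (-(L * (2 * (1 / (2 * r)))) / (2 * r)^2)
        = (L / (4 * (r * r) * r)) * (L * r * c - s) := by
      intro r c s hr
      field_simp
      ring
    have heq := halg (Real.sqrt u) (Real.cosh (L * Real.sqrt u)) (Real.sinh (L * Real.sqrt u)) hs
    rw [hsq] at heq
    rw [heq] at hmul
    exact hmul.hasDerivWithinAt
  · intro u hu
    rw [interior_Ici] at hu
    have hu0 : (0:ℝ) < u := hu
    have hs : (0:ℝ) < Real.sqrt u := Real.sqrt_pos.2 hu0
    have hx : (0:ℝ) ≤ L * Real.sqrt u := mul_nonneg hL hs.le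
    have hkey := my_sinh_le_mul_cosh hx
    have hc : (0:ℝ) ≤ L / (4 * u * Real.sqrt u) := by positivity
    exact mul_nonneg hc (by linarith)

lemma my_chord {L G a p b : ℝ} (hL : 0 ≤ L) (hG : 0 < G) (ha : 0 ≤ a)
    (hb : 0 ≤ b) (hbG : b ≤ G) (hp : |p| ≤ b) :
    Real.cosh (L * Real.sqrt (a^2 + 2*a*p + b^2)) ≤
      Real.cosh (L*a) * Real.cosh (L*G) + (p/G) * (Real.sinh (L*a) * Real.sinh (L*G)) := by
  have hpb : -b ≤ p ∧ p ≤ b := abs_le.1 hp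
  have hnn1 : (0:ℝ) ≤ a^2 + 2*a*p + b^2 := by nlinarith [sq_nonneg (a+p), hpb.1, hpb.2]
  have hnn2 : (0:ℝ) ≤ a^2 + 2*a*p + G^2 := by nlinarith [sq_nonneg (a+p), hpb.1, hpb.2]
  have hmono : Real.cosh (L * Real.sqrt (a^2 + 2*a*p + b^2)) ≤
      Real.cosh (L * Real.sqrt (a^2 + 2*a*p + G^2)) := by
    rw [Real.cosh_le_cosh]
    have h1 : Real.sqrt (a^2 + 2*a*p + b^2) ≤ Real.sqrt (a^2 + 2*a*p + G^2) :=
      Real.sqrt_le_sqrt (by nlinarith)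
    have h2 : (0:ℝ) ≤ Real.sqrt (a^2 + 2*a*p + b^2) := Real.sqrt_nonneg _
    rw [abs_of_nonneg (mul_nonneg hL h2), abs_of_nonneg (mul_nonneg hL (Real.sqrt_nonneg _))]
    exact mul_le_mul_of_nonneg_left h1 hL
  refine hmono.trans ?_
  set t₁ := (G - p) / (2*G) with ht1def
  set t₂ := (G + p) / (2*G) with ht2def
  have ht₁ : 0 ≤ t₁ := by
    apply div_nonneg _ (by linarith)
    linarith [hpb.2]
  have ht₂ : 0 ≤ t₂ := by
    apply div_nonneg _ (by linarith)
    linarith [hpb.1]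
  have hsum : t₁ + t₂ = 1 := by
    rw [ht1def, ht2def]; field_simp; ring
  have hcomb : t₁ * (a - G)^2 + t₂ * (a + G)^2 = a^2 + 2*a*p + G^2 := by
    rw [ht1def, ht2def]
    field_simp
    ring
  have hcv := my_convexOn_cosh_sqrt hL
  have hmem1 : (a - G)^2 ∈ Set.Ici (0:ℝ) := Set.mem_Ici.2 (by positivity)
  have hmem2 : (a + G)^2 ∈ Set.Ici (0:ℝ) := Set.mem_Ici.2 (by positivity)
  have hjensen := hcv.2 hmem1 hmem2 ht₁ ht₂ hsum
  simp only [smul_eq_mul] at hjensen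
  rw [hcomb] at hjensen
  refine hjensen.trans ?_
  have e1 : Real.sqrt ((a - G)^2) = |a - G| := Real.sqrt_sq_eq_abs _
  have e2 : Real.sqrt ((a + G)^2) = a + G := by
    rw [Real.sqrt_sq_eq_abs, abs_of_nonneg (by linarith)]
  rw [e1, e2]
  have e3 : Real.cosh (L * |a - G|) = Real.cosh (L * (a - G)) := by
    rw [show L * |a - G| = |L * (a - G)| by rw [abs_mul, abs_of_nonneg hL], Real.cosh_abs]
  rw [e3]
  have e4 : L * (a - G) = L*a - L*G := by ring
  have e5 : L * (a + G) = L*a + L*G := by ring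
  rw [e4, e5, Real.cosh_sub, Real.cosh_add]
  rw [ht1def, ht2def]
  field_simp
  ring_nf
  nlinarith [sq_nonneg G]

open scoped RealInnerProductSpace in
lemma my_step {E : Type*} [NormedAddCommGroup E] [InnerProductSpace ℝ E]
    {L G : ℝ} (hL : 0 ≤ L) (hG : 0 < G) (s v : E) (hv : ‖v‖ ≤ G) :
    Real.cosh (L * ‖s + v‖) ≤ Real.cosh (L * ‖s‖) * Real.cosh (L * G) +
      (Real.sinh (L * ‖s‖) * Real.sinh (L * G) / (‖s‖ * G)) * ⟪s, v⟫ := by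
  by_cases hs : s = 0
  · subst hs
    simp only [inner_zero_left, mul_zero, add_zero, zero_add, norm_zero,
      Real.cosh_zero, one_mul]
    rw [Real.cosh_le_cosh, abs_of_nonneg (mul_nonneg hL (norm_nonneg _)),
      abs_of_nonneg (mul_nonneg hL hG.le)]
    exact mul_le_mul_of_nonneg_left hv hL
  · have ha : (0:ℝ) < ‖s‖ := norm_pos_iff.2 hs
    set a := ‖s‖
    set b := ‖v‖
    set p := ⟪s, v⟫ / a with hpdef
    have hip : ⟪s, v⟫ = a * p := by
      rw [hpdef]; field_simp
    have hb : 0 ≤ b := norm_nonneg _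
    have hpb : |p| ≤ b := by
      rw [hpdef, abs_div, abs_of_nonneg ha.le, div_le_iff₀ ha]
      calc |⟪s, v⟫| ≤ a * b := abs_real_inner_le_norm s v
      _ = b * a := by ring
    have hnorm : ‖s + v‖ = Real.sqrt (a^2 + 2*a*p + b^2) := by
      rw [← Real.sqrt_sq (norm_nonneg (s + v)), norm_add_sq_real, hip]
      show Real.sqrt (a^2 + 2*(a*p) + b^2) = _
      ring_nf
    rw [hnorm]
    have hch := my_chord hL hG ha.le hb hv hpb
    refine hch.trans_eq' ?_ |>.trans_eq ?_
    · rfl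
    · rw [hip]
      field_simp

lemma my_coord_le_norm {d : ℕ} (x : EuclideanSpace ℝ (Fin d)) (i : Fin d) : |x i| ≤ ‖x‖ := by
  rw [EuclideanSpace.norm_eq]
  rw [← Real.sqrt_sq_eq_abs]
  apply Real.sqrt_le_sqrt
  have : |x i| ^ 2 ≤ ∑ j, ‖x j‖ ^ 2 := by
    have := Finset.single_le_sum (f := fun j => ‖x j‖ ^ 2) (fun j _ => by positivity)
      (Finset.mem_univ i)
    simpa [Real.norm_eq_abs, sq_abs] using this
  simpa [sq_abs] using this

lemma my_coord_condexp {Ω : Type*} {m m0 : MeasurableSpace Ω} {P : Measure Ω}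
    [IsProbabilityMeasure P] {d : ℕ} (hm : m ≤ m0)
    {V : Ω → EuclideanSpace ℝ (Fin d)} (hVint : Integrable V P)
    (hV : P[V|m] =ᵐ[P] 0) (i : Fin d) :
    P[fun ω => V ω i | m] =ᵐ[P] 0 := by
  have hVi : Integrable (fun ω => V ω i) P := by
    have := (EuclideanSpace.proj i : EuclideanSpace ℝ (Fin d) →L[ℝ] ℝ).integrable_comp hVint
    simpa using this
  refine (ae_eq_condExp_of_forall_setIntegral_eq hm hVi ?_ ?_ ?_).symm
  · intro s _ _
    exact integrableOn_zero
  · intro s hs hμs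
    have hVs : Integrable V (P.restrict s) := hVint.restrict
    have h1 : ∫ ω in s, V ω i ∂P = (EuclideanSpace.proj i : EuclideanSpace ℝ (Fin d) →L[ℝ] ℝ)
        (∫ ω in s, V ω ∂P) := by
      rw [← ContinuousLinearMap.integral_comp_comm _ hVs]
      rfl
    have h2 : ∫ ω in s, V ω ∂P = 0 := by
      rw [← setIntegral_condExp hm hVint hs]
      calc ∫ ω in s, (P[V|m]) ω ∂P = ∫ ω in s, (0 : EuclideanSpace ℝ (Fin d)) ∂P :=
        setIntegral_congr_ae (hm s hs) (hV.mono fun ω hω _ => hω)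
      _ = 0 := by simp
    rw [h1, h2]
    simp
  · exact StronglyMeasurable.aestronglyMeasurable
      (@stronglyMeasurable_const _ _ m _ (0:ℝ))

lemma my_integral_inner_zero {Ω : Type*} {m m0 : MeasurableSpace Ω} {P : Measure Ω}
    [IsProbabilityMeasure P] {d : ℕ} (hm : m ≤ m0)
    {W V : Ω → EuclideanSpace ℝ (Fin d)} (hW : StronglyMeasurable[m] W) {C : ℝ}
    (hWb : ∀ᵐ ω ∂P, ‖W ω‖ ≤ C) (hVint : Integrable V P) (hV : P[V|m] =ᵐ[P] 0) :
    ∫ ω, (inner ℝ (W ω) (V ω) : ℝ) ∂P = 0 := by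
  have hVi : ∀ i : Fin d, Integrable (fun ω => V ω i) P := fun i => by
    have := (EuclideanSpace.proj i : EuclideanSpace ℝ (Fin d) →L[ℝ] ℝ).integrable_comp hVint
    simpa using this
  have hWi : ∀ i : Fin d, StronglyMeasurable[m] (fun ω => W ω i) := fun i =>
    (EuclideanSpace.proj i : EuclideanSpace ℝ (Fin d) →L[ℝ] ℝ).continuous.comp_stronglyMeasurable hW
  have hWib : ∀ i : Fin d, ∀ᵐ ω ∂P, ‖W ω i‖ ≤ C := fun i => by
    filter_upwards [hWb] with ω hω
    exact (my_coord_le_norm (W ω) i).trans hω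
  have hint : ∀ i : Fin d, Integrable (fun ω => W ω i * V ω i) P := fun i =>
    (hVi i).bdd_mul (((hWi i).mono hm).aestronglyMeasurable) (hWib i)
  have hzero : ∀ i : Fin d, ∫ ω, W ω i * V ω i ∂P = 0 := by
    intro i
    have hcond := condExp_stronglyMeasurable_mul_of_bound hm (hWi i) (hVi i) C (hWib i)
    have hcond0 : P[(fun ω => W ω i) * (fun ω => V ω i)|m] =ᵐ[P] 0 := by
      refine hcond.trans ?_
      filter_upwards [my_coord_condexp hm hVint hV i] with ω hω
      simp [hω]
    have h1 : ∫ ω, W ω i * V ω i ∂P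
        = ∫ ω, (P[(fun ω => W ω i) * (fun ω => V ω i)|m]) ω ∂P :=
      (integral_condExp hm).symm
    rw [h1, integral_congr_ae hcond0]
    simp
  have hrepr : ∀ ω, (inner ℝ (W ω) (V ω) : ℝ) = ∑ i, W ω i * V ω i := by
    intro ω
    rw [PiLp.inner_apply]
    simp [RCLike.inner_apply, mul_comm]
  calc ∫ ω, (inner ℝ (W ω) (V ω) : ℝ) ∂P = ∫ ω, ∑ i, W ω i * V ω i ∂P :=
        integral_congr_ae (Filter.Eventually.of_forall hrepr)
  _ = ∑ i, ∫ ω, W ω i * V ω i ∂P := integral_finset_sum _ (fun i _ => hint i)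
  _ = 0 := by simp [hzero]

/-- Vector Hoeffding–Azuma: for a martingale difference sequence `V₁,…,V_n` in `ℝ^d`
(adapted, conditionally centered, `‖V_k‖₂ ≤ G` a.s.), with probability at least `1 - δ`,
`‖Σ_{k=1}^n V_k‖₂ ≤ G √(2 n log(2/δ))`. -/
theorem stmt11 {Ω : Type*} {m0 : MeasurableSpace Ω} (P : Measure Ω) [IsProbabilityMeasure P]
    {d : ℕ} (𝓕 : Filtration ℕ m0) (n : ℕ) (G δ : ℝ) (hG : 0 ≤ G)
    (hδ : δ ∈ Set.Ioo (0 : ℝ) 1)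
    (V : ℕ → Ω → EuclideanSpace ℝ (Fin d))
    (hadapt : ∀ k, StronglyMeasurable[𝓕 k] (V k))
    (hmart : ∀ k ∈ Finset.Icc 1 n, P[V k | 𝓕 (k - 1)] =ᵐ[P] 0)
    (hbdd : ∀ k ∈ Finset.Icc 1 n, ∀ᵐ ω ∂P, ‖V k ω‖ ≤ G) :
    1 - δ ≤ (P {ω | ‖∑ k ∈ Finset.Icc 1 n, V k ω‖ ≤
      G * Real.sqrt (2 * n * Real.log (2 / δ))}).toReal := by
  obtain ⟨hδ0, hδ1⟩ := hδ
  set S : ℕ → Ω → EuclideanSpace ℝ (Fin d) := fun k ω => ∑ j ∈ Finset.Icc 1 k, V j ω with hSdef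
  set t : ℝ := G * Real.sqrt (2 * n * Real.log (2 / δ)) with htdef
  have hmain : ∀ T : Set Ω, T = {ω | ‖S n ω‖ ≤ t} → 1 - δ ≤ (P T).toReal := by
    intro T hT
    by_cases hdeg : G = 0 ∨ n = 0
    · -- degenerate case : a.e. the sum is zero and t = 0
      have hae : ∀ᵐ ω ∂P, ‖S n ω‖ ≤ t := by
        have ht0 : 0 ≤ t := by
          rw [htdef]; positivity
        rcases hdeg with h | h
        · have hall : ∀ᵐ ω ∂P, ∀ j, j ∈ Finset.Icc 1 n → ‖V j ω‖ ≤ G := by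
            rw [ae_all_iff]
            intro j
            by_cases hj : j ∈ Finset.Icc 1 n
            · filter_upwards [hbdd j hj] with ω hω _; exact hω
            · exact Filter.Eventually.of_forall fun ω hj' => absurd hj' hj
          filter_upwards [hall] with ω hω
          have : ‖S n ω‖ ≤ 0 := by
            calc ‖S n ω‖ ≤ ∑ j ∈ Finset.Icc 1 n, ‖V j ω‖ := norm_sum_le _ _
            _ ≤ ∑ j ∈ Finset.Icc 1 n, G := Finset.sum_le_sum hω
            _ ≤ 0 := by simp [h]
          linarith
        · subst h
          refine Filter.Eventually.of_forall fun ω => ?_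
          have : S 0 ω = 0 := by simp [hSdef]
          rw [this, norm_zero]; exact ht0
      have h1 : (1:ENNReal) ≤ P T := by
        have hc : P {ω | ¬ ‖S n ω‖ ≤ t} = 0 := ae_iff.1 hae
        calc (1:ENNReal) = P Set.univ := measure_univ.symm
        _ ≤ P ({ω | ‖S n ω‖ ≤ t} ∪ {ω | ¬ ‖S n ω‖ ≤ t}) := by
            refine measure_mono fun ω _ => ?_
            by_cases h : ‖S n ω‖ ≤ t
            exacts [Or.inl h, Or.inr h]
        _ ≤ P {ω | ‖S n ω‖ ≤ t} + P {ω | ¬ ‖S n ω‖ ≤ t} := measure_union_le _ _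
        _ = P T := by rw [hc, add_zero, hT]
      have h2 : P T = 1 := le_antisymm prob_le_one h1
      rw [h2]
      simp only [ENNReal.toReal_one]
      linarith
    · push_neg at hdeg
      obtain ⟨hG0, hn0⟩ := hdeg
      have hG' : 0 < G := lt_of_le_of_ne hG (Ne.symm hG0)
      have hn : 1 ≤ n := Nat.one_le_iff_ne_zero.2 hn0
      have hn' : (1:ℝ) ≤ (n:ℝ) := by exact_mod_cast hn
      have hlog : 0 < Real.log (2 / δ) := Real.log_pos (by rw [lt_div_iff₀ hδ0]; linarith)
      have harg : 0 < 2 * (n:ℝ) * Real.log (2 / δ) := by nlinarith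
      have ht0 : 0 < t := by rw [htdef]; exact mul_pos hG' (Real.sqrt_pos.2 harg)
      have ht2 : t^2 = G^2 * (2 * (n:ℝ) * Real.log (2 / δ)) := by
        rw [htdef, mul_pow, Real.sq_sqrt harg.le]
      set L : ℝ := t / ((n:ℝ) * G^2) with hLdef
      have hL0 : 0 < L := div_pos ht0 (by positivity)
      -- basic measurability and integrability facts
      have hVsm : ∀ k, StronglyMeasurable (V k) := fun k => (hadapt k).mono (𝓕.le k)
      have hVint : ∀ k ∈ Finset.Icc 1 n, Integrable (V k) P := fun k hk =>
        Integrable.mono' (integrable_const G) (hVsm k).aestronglyMeasurable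
          (by filter_upwards [hbdd k hk] with ω h; exact h)
      have hSsm : ∀ k, StronglyMeasurable[𝓕 k] (S k) := fun k =>
        Finset.stronglyMeasurable_fun_sum _ fun j hj =>
          (hadapt j).mono (𝓕.mono (Finset.mem_Icc.1 hj).2)
      have hSbdd : ∀ k, k ≤ n → ∀ᵐ ω ∂P, ‖S k ω‖ ≤ (k:ℝ) * G := by
        intro k hk
        have hall : ∀ᵐ ω ∂P, ∀ j, j ∈ Finset.Icc 1 k → ‖V j ω‖ ≤ G := by
          rw [ae_all_iff]
          intro j
          by_cases hj : j ∈ Finset.Icc 1 k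
          · have hj' : j ∈ Finset.Icc 1 n := by
              rw [Finset.mem_Icc] at hj ⊢; omega
            filter_upwards [hbdd j hj'] with ω hω _; exact hω
          · exact Filter.Eventually.of_forall fun ω hj' => absurd hj' hj
        filter_upwards [hall] with ω hω
        calc ‖S k ω‖ ≤ ∑ j ∈ Finset.Icc 1 k, ‖V j ω‖ := norm_sum_le _ _
        _ ≤ ∑ j ∈ Finset.Icc 1 k, G := Finset.sum_le_sum hω
        _ = ((Finset.Icc 1 k).card : ℝ) * G := by rw [Finset.sum_const, nsmul_eq_mul]
        _ ≤ (k:ℝ) * G := by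
            have : (Finset.Icc 1 k).card = k := by rw [Nat.card_Icc]; omega
            rw [this]
      have hcoshsm : ∀ k, StronglyMeasurable (fun ω => Real.cosh (L * ‖S k ω‖)) := fun k =>
        Real.continuous_cosh.comp_stronglyMeasurable
          (stronglyMeasurable_const.mul ((hSsm k).mono (𝓕.le k)).norm)
      have hcoshint : ∀ k, k ≤ n → Integrable (fun ω => Real.cosh (L * ‖S k ω‖)) P := by
        intro k hk
        refine Integrable.mono' (integrable_const (Real.cosh (L * ((k:ℝ) * G))))
          (hcoshsm k).aestronglyMeasurable ?_
        filter_upwards [hSbdd k hk] with ω h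
        rw [Real.norm_eq_abs, abs_of_pos (Real.cosh_pos _)]
        rw [Real.cosh_le_cosh]
        rw [abs_of_nonneg (by positivity), abs_of_nonneg (by positivity)]
        exact mul_le_mul_of_nonneg_left h hL0.le
      -- the key exponential moment bound
      have key : ∀ k, k ≤ n → ∫ ω, Real.cosh (L * ‖S k ω‖) ∂P ≤ Real.cosh (L * G) ^ k := by
        intro k
        induction k with
        | zero =>
          intro _
          have h0 : ∀ ω, S 0 ω = 0 := fun ω => by simp [hSdef]
          have : (fun ω => Real.cosh (L * ‖S 0 ω‖)) = fun _ => (1:ℝ) := by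
            funext ω; rw [h0, norm_zero, mul_zero, Real.cosh_zero]
          rw [this, integral_const]
          simp
        | succ k ih =>
          intro hk1
          have hk : k ≤ n := Nat.le_of_succ_le hk1
          have ihk := ih hk
          have hkmem : k + 1 ∈ Finset.Icc 1 n := Finset.mem_Icc.2 ⟨Nat.succ_le_succ (Nat.zero_le k), hk1⟩
          have hm : 𝓕 k ≤ m0 := 𝓕.le k
          have hmart' : P[V (k+1) | 𝓕 k] =ᵐ[P] 0 := by
            have := hmart (k+1) hkmem
            simpa using this
          set W : Ω → EuclideanSpace ℝ (Fin d) := fun ω =>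
            (Real.sinh (L * ‖S k ω‖) * Real.sinh (L * G) / (‖S k ω‖ * G)) • S k ω with hWdef
          have hnormsm : StronglyMeasurable[𝓕 k] (fun ω => ‖S k ω‖) := (hSsm k).norm
          have hWsm : StronglyMeasurable[𝓕 k] W := by
            have h2m : Measurable[𝓕 k] fun ω => Real.sinh (L * ‖S k ω‖) :=
              Real.continuous_sinh.measurable.comp (measurable_const.mul hnormsm.measurable)
            have hcoefm : Measurable[𝓕 k] fun ω =>
                Real.sinh (L * ‖S k ω‖) * Real.sinh (L * G) / (‖S k ω‖ * G) :=
              (h2m.mul_const _).div (hnormsm.measurable.mul_const _)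
            exact (hcoefm.smul (hSsm k).measurable).stronglyMeasurable
          set C : ℝ := Real.sinh (L * ((k:ℝ) * G)) * Real.sinh (L * G) / G with hCdef
          have hC0 : 0 ≤ C := by
            rw [hCdef]
            have h1 : 0 ≤ Real.sinh (L * ((k:ℝ) * G)) := Real.sinh_nonneg_iff.2 (by positivity)
            have h2 : 0 ≤ Real.sinh (L * G) := Real.sinh_nonneg_iff.2 (by positivity)
            positivity
          have hWbdd : ∀ᵐ ω ∂P, ‖W ω‖ ≤ C := by
            filter_upwards [hSbdd k hk] with ω hω
            by_cases h0 : S k ω = 0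
            · rw [hWdef]
              simp only [h0, smul_zero, norm_zero]
              exact hC0
            · have hns : 0 < ‖S k ω‖ := norm_pos_iff.2 h0
              rw [hWdef]
              simp only []
              rw [norm_smul, Real.norm_eq_abs]
              have hs1 : 0 ≤ Real.sinh (L * ‖S k ω‖) := Real.sinh_nonneg_iff.2 (by positivity)
              have hs2 : 0 ≤ Real.sinh (L * G) := Real.sinh_nonneg_iff.2 (by positivity)
              have hcoefnn : 0 ≤ Real.sinh (L * ‖S k ω‖) * Real.sinh (L * G) / (‖S k ω‖ * G) := by
                positivity
              rw [abs_of_nonneg hcoefnn]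
              have heq : Real.sinh (L * ‖S k ω‖) * Real.sinh (L * G) / (‖S k ω‖ * G) * ‖S k ω‖
                  = Real.sinh (L * ‖S k ω‖) * Real.sinh (L * G) / G := by
                field_simp
              rw [heq, hCdef]
              have hmono : Real.sinh (L * ‖S k ω‖) ≤ Real.sinh (L * ((k:ℝ) * G)) :=
                Real.sinh_le_sinh.2 (mul_le_mul_of_nonneg_left hω hL0.le)
              gcongr
          have hstep : ∀ᵐ ω ∂P, Real.cosh (L * ‖S (k+1) ω‖) ≤
              Real.cosh (L * ‖S k ω‖) * Real.cosh (L * G) + (inner ℝ (W ω) (V (k+1) ω) : ℝ) := by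
            filter_upwards [hbdd (k+1) hkmem] with ω hω
            have hsum : S (k+1) ω = S k ω + V (k+1) ω := by
              rw [hSdef]
              exact Finset.sum_Icc_succ_top (Nat.succ_le_succ (Nat.zero_le k)) _
            rw [hsum]
            refine (my_step hL0.le hG' (S k ω) (V (k+1) ω) hω).trans (le_of_eq ?_)
            rw [hWdef]
            rw [real_inner_smul_left]
          have hinner_int : Integrable (fun ω => (inner ℝ (W ω) (V (k+1) ω) : ℝ)) P := by
            refine Integrable.mono' (integrable_const (C * G))
              (((hWsm.mono hm).inner (hVsm (k+1))).aestronglyMeasurable) ?_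
            filter_upwards [hWbdd, hbdd (k+1) hkmem] with ω h1 h2
            rw [Real.norm_eq_abs]
            calc |(inner ℝ (W ω) (V (k+1) ω) : ℝ)| ≤ ‖W ω‖ * ‖V (k+1) ω‖ :=
              abs_real_inner_le_norm _ _
            _ ≤ C * G := mul_le_mul h1 h2 (norm_nonneg _) hC0
          have hzero : ∫ ω, (inner ℝ (W ω) (V (k+1) ω) : ℝ) ∂P = 0 :=
            my_integral_inner_zero hm hWsm hWbdd (hVint (k+1) hkmem) hmart'
          have hchain := integral_mono_ae (hcoshint (k+1) hk1)
            (((hcoshint k hk).mul_const (Real.cosh (L * G))).add hinner_int) hstep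
          calc ∫ ω, Real.cosh (L * ‖S (k+1) ω‖) ∂P
              ≤ ∫ ω, (Real.cosh (L * ‖S k ω‖) * Real.cosh (L * G)
                + (inner ℝ (W ω) (V (k+1) ω) : ℝ)) ∂P := hchain
          _ = (∫ ω, Real.cosh (L * ‖S k ω‖) * Real.cosh (L * G) ∂P)
                + ∫ ω, (inner ℝ (W ω) (V (k+1) ω) : ℝ) ∂P :=
              integral_add ((hcoshint k hk).mul_const _) hinner_int
          _ = (∫ ω, Real.cosh (L * ‖S k ω‖) ∂P) * Real.cosh (L * G) := by
              rw [hzero, add_zero, integral_mul_const]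
          _ ≤ Real.cosh (L * G) ^ k * Real.cosh (L * G) := by
              exact mul_le_mul_of_nonneg_right ihk (Real.cosh_pos _).le
          _ = Real.cosh (L * G) ^ (k+1) := by ring
      -- Markov / Chernoff step
      set A : Set Ω := {ω | t < ‖S n ω‖} with hAdef
      have hAmeas : MeasurableSet A :=
        measurableSet_lt measurable_const (((hSsm n).mono (𝓕.le n)).measurable.norm)
      have hconst : ∀ ω ∈ A, Real.exp (L * t) / 2 ≤ Real.cosh (L * ‖S n ω‖) := by
        intro ω hω
        have h1 : Real.exp (L * t) ≤ Real.exp (L * ‖S n ω‖) :=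
          Real.exp_le_exp.2 (mul_le_mul_of_nonneg_left (le_of_lt hω) hL0.le)
        have h2 : Real.exp (L * ‖S n ω‖) / 2 ≤ Real.cosh (L * ‖S n ω‖) := by
          rw [Real.cosh_eq]
          have := Real.exp_pos (-(L * ‖S n ω‖))
          linarith
        linarith
      have h1 : Real.exp (L * t) / 2 * (P A).toReal ≤ ∫ ω, Real.cosh (L * ‖S n ω‖) ∂P := by
        refine (setIntegral_ge_of_const_le_real hAmeas (measure_ne_top P _) hconst
          ((hcoshint n le_rfl).integrableOn)).trans ?_
        exact setIntegral_le_integral (hcoshint n le_rfl)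
          (Filter.Eventually.of_forall fun ω => (Real.cosh_pos _).le)
      have h2 := key n le_rfl
      have hcn : Real.cosh (L * G) ^ n ≤ Real.exp ((n:ℝ) * ((L*G)^2/2)) := by
        calc Real.cosh (L * G) ^ n ≤ Real.exp ((L*G)^2/2) ^ n := by
              apply pow_le_pow_left₀ (Real.cosh_pos _).le (Real.cosh_le_exp_half_sq _)
        _ = Real.exp ((n:ℝ) * ((L*G)^2/2)) := (Real.exp_nat_mul _ n).symm
      have hGne : G ≠ 0 := ne_of_gt hG'
      have hnne : (n:ℝ) ≠ 0 := by positivity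
      have eLt : L * t = 2 * Real.log (2 / δ) := by
        rw [hLdef]
        rw [div_mul_eq_mul_div, ← sq]
        rw [ht2]
        field_simp
      have eHalf : (n:ℝ) * ((L*G)^2/2) = Real.log (2 / δ) := by
        rw [hLdef]
        rw [mul_pow, div_pow, ht2]
        field_simp
      have hPA : (P A).toReal ≤ δ := by
        have hE : (0:ℝ) < Real.exp (L * t) := Real.exp_pos _
        have hfin : (P A).toReal * (Real.exp (L * t) / 2) ≤ Real.cosh (L * G) ^ n := by
          calc (P A).toReal * (Real.exp (L * t) / 2)
              = Real.exp (L * t) / 2 * (P A).toReal := by ring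
          _ ≤ ∫ ω, Real.cosh (L * ‖S n ω‖) ∂P := h1
          _ ≤ Real.cosh (L * G) ^ n := h2
        have hfin2 : (P A).toReal * (Real.exp (L * t) / 2) ≤ 2 / δ := by
          refine (hfin.trans hcn).trans_eq ?_
          rw [eHalf, Real.exp_log (by positivity)]
        have hexp2 : Real.exp (L * t) = 2/δ * (2/δ) := by
          rw [eLt, two_mul, Real.exp_add, Real.exp_log (by positivity)]
        rw [hexp2] at hfin2
        have h5 : (P A).toReal * (2/δ * (2/δ) / 2) * (δ * δ / 2) = (P A).toReal := by
          field_simp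
        have h6 : 2/δ * (δ * δ / 2) = δ := by
          field_simp
        calc (P A).toReal = (P A).toReal * (2/δ * (2/δ) / 2) * (δ * δ / 2) := h5.symm
        _ ≤ 2/δ * (δ * δ / 2) := mul_le_mul_of_nonneg_right hfin2 (by positivity)
        _ = δ := h6
      have hTc : T = Aᶜ := by
        rw [hT, hAdef]
        ext ω
        simp [not_lt]
      have hPT : P T = 1 - P A := by rw [hTc, prob_compl_eq_one_sub hAmeas]
      rw [hPT, ENNReal.toReal_sub_of_le prob_le_one ENNReal.one_ne_top]
      simp only [ENNReal.toReal_one]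
      linarith [hPA]
  exact hmain _ rfl
end
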